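/- Let z, p : ℕ → ℚ be sequences with z(1) = 1. Suppose that as formal power series over ℚ, 1 + Σ_{d≥1} (z(d+1)/(2d)!)·x^d = exp( Σ_{k≥1} (p(k)·z(k)/(2k)!)·x^k ). Then for every d ≥ 2, z(d) = Σ_{k=1}^{d−1} z(k)·z(d−k)·p(k)·C(2d−3, 2k−1), where C denotes the binomial coefficient. -/

import Mathlib

/-- Formal exponential of a power series with zero constant term: the `n`-th
coefficient of `exp G = Σ_{k≥0} G^k / k!` (only `k ≤ n` contribute). -/
noncomputable def formalExp (G : PowerSeries ℚ) : PowerSeries ℚ :=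
  PowerSeries.mk fun n =>
    ∑ k ∈ Finset.range (n + 1), PowerSeries.coeff (R := ℚ) n (G ^ k) / (Nat.factorial k)

/-!
Write `F = exp G`. Differentiating gives `F' = G' F`; this is checked on the partial sums
`∑_{k<N} G^k / k!`, which agree with `F` below degree `N` because `G` has no constant term.
In coefficients, `(n + 1) f(n + 1) = ∑_{k=1}^{n+1} k g(k) f(n + 1 - k)`. With
`f(j) = z(j + 1)/(2j)!` (also for `j = 0`, as `z 1 = 1`) and `g(k) = p(k) z(k)/(2k)!`,
multiplying by `(2n + 2)!/(n + 1)` turns the factorial weights into the binomial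
coefficients `C(2n + 1, 2k - 1)`.
-/

open PowerSeries Finset Nat

noncomputable def expPartialSum (N : ℕ) (G : ℚ⟦X⟧) : ℚ⟦X⟧ :=
  ∑ k ∈ range N, C (k ! : ℚ)⁻¹ * G ^ k

lemma coeff_formalExp_eq_coeff_expPartialSum {G : ℚ⟦X⟧} (hG : constantCoeff G = 0) {n N : ℕ}
    (h : n < N) : coeff n (formalExp G) = coeff n (expPartialSum N G) := by
  simp only [formalExp, expPartialSum, coeff_mk, map_sum, coeff_C_mul, div_eq_inv_mul]
  refine sum_subset (range_subset_range.2 h) fun k _ hkn => ?_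
  have hk : (n : ℕ∞) < order (G ^ k) :=
    (Nat.cast_lt.2 (by simpa using hkn)).trans_le (le_order_pow_of_constantCoeff_eq_zero k hG)
  rw [coeff_of_lt_order n hk, mul_zero]

lemma trunc_formalExp {G : ℚ⟦X⟧} (hG : constantCoeff G = 0) (N : ℕ) :
    trunc N (formalExp G) = trunc N (expPartialSum N G) := by
  ext n
  simp only [coeff_trunc]
  split_ifs with h
  · exact coeff_formalExp_eq_coeff_expPartialSum hG h
  · rfl

lemma derivative_expPartialSum_succ (N : ℕ) (G : ℚ⟦X⟧) :
    d⁄dX ℚ (expPartialSum (N + 1) G) = d⁄dX ℚ G * expPartialSum N G := by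
  rw [expPartialSum, sum_range_succ', map_add, map_sum, expPartialSum, mul_sum]
  simp only [pow_zero, mul_one, derivative_C, add_zero, Derivation.leibniz, derivative_pow,
    smul_eq_mul]
  refine sum_congr rfl fun k _ => ?_
  have hk : C ((k + 1 : ℕ) : ℚ)⁻¹ * ((k + 1 : ℕ) : ℚ⟦X⟧) = 1 := by
    rw [← map_natCast C, ← map_mul, inv_mul_cancel₀ (by positivity), map_one]
  rw [factorial_succ, cast_mul, mul_inv, map_mul, Nat.add_sub_cancel]
  linear_combination (C (k ! : ℚ)⁻¹ * G ^ k * d⁄dX ℚ G) * hk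

theorem derivative_formalExp {G : ℚ⟦X⟧} (hG : constantCoeff G = 0) :
    d⁄dX ℚ (formalExp G) = d⁄dX ℚ G * formalExp G := by
  ext n
  calc coeff n (d⁄dX ℚ (formalExp G))
      = coeff n (d⁄dX ℚ (expPartialSum (n + 2) G)) := by
        rw [coeff_derivative, coeff_derivative,
          coeff_formalExp_eq_coeff_expPartialSum hG (Nat.lt_succ_self _)]
    _ = coeff n (d⁄dX ℚ G * expPartialSum (n + 1) G) := by rw [derivative_expPartialSum_succ]
    _ = coeff n (d⁄dX ℚ G * formalExp G) := by
        rw [← coeff_coe_trunc_of_lt n.lt_succ_self, ← trunc_mul_trunc, ← trunc_formalExp hG,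
          trunc_mul_trunc, coeff_coe_trunc_of_lt n.lt_succ_self]

lemma PowerSeries.coeff_eq_sum_of_derivative_eq {R : Type*} [CommSemiring R] {f g : ℕ → R}
    (h : d⁄dX R (mk f) = d⁄dX R (mk g) * mk f) (n : ℕ) :
    f (n + 1) * (n + 1) = ∑ k ∈ Icc 1 (n + 1), g k * k * f (n + 1 - k) := by
  have hn := congrArg (coeff n) h
  rw [coeff_derivative, coeff_mk, coeff_mul, Nat.sum_antidiagonal_eq_sum_range_succ_mk] at hn
  simp only [coeff_derivative, coeff_mk] at hn
  rw [hn, ← Ico_add_one_right_eq_Icc, ← zero_add 1, ← sum_Ico_add', ← range_eq_Ico]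
  refine sum_congr rfl fun i _ => ?_
  rw [Nat.add_sub_add_right]
  push_cast
  ring

lemma Nat.cast_choose_two_mul_sub_one {K : Type*} [Field K] [CharZero K] {k m : ℕ} (hk : 1 ≤ k)
    (hkm : k ≤ m) :
    ((2 * m - 1).choose (2 * k - 1) : K) = (2 * m)! / m * (k / (2 * k)!) / (2 * (m - k))! := by
  obtain ⟨i, rfl⟩ : ∃ i, k = i + 1 := ⟨k - 1, by omega⟩
  obtain ⟨l, rfl⟩ : ∃ l, m = l + 1 := ⟨m - 1, by omega⟩
  have hsub : 2 * (l + 1) - 1 - (2 * (i + 1) - 1) = 2 * (l - i) := by omega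
  rw [Nat.cast_choose K (by omega), hsub, Nat.add_sub_add_right,
    show 2 * (l + 1) = 2 * l + 1 + 1 by ring, show 2 * (i + 1) = 2 * i + 1 + 1 by ring,
    Nat.add_sub_cancel, Nat.add_sub_cancel, factorial_succ (2 * l + 1), factorial_succ (2 * i + 1)]
  have h₁ : ((2 * i + 1)! : K) ≠ 0 := Nat.cast_ne_zero.2 (factorial_ne_zero _)
  have h₂ : ((2 * (l - i))! : K) ≠ 0 := Nat.cast_ne_zero.2 (factorial_ne_zero _)
  have h₃ : (2 * (i : K) + 1 + 1) ≠ 0 := by exact_mod_cast succ_ne_zero (2 * i + 1)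
  have h₄ : ((l : K) + 1) ≠ 0 := l.cast_add_one_ne_zero
  push_cast
  field_simp
  ring

theorem quiver_dt_recursion_line (z p : ℕ → ℚ) (hz1 : z 1 = 1)
    (hyp : PowerSeries.mk (fun d => if d = 0 then 1 else z (d + 1) / (Nat.factorial (2 * d)))
      = formalExp (PowerSeries.mk fun k =>
          if k = 0 then 0 else p k * z k / (Nat.factorial (2 * k)))) :
    ∀ d : ℕ, 2 ≤ d → z d = ∑ k ∈ Finset.Icc 1 (d - 1),
      z k * z (d - k) * p k * (Nat.choose (2 * d - 3) (2 * k - 1)) := by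
  intro d hd
  obtain ⟨n, rfl⟩ : ∃ n, d = n + 2 := ⟨d - 2, by omega⟩
  set G : ℚ⟦X⟧ := mk fun k => if k = 0 then 0 else p k * z k / (2 * k)!
  have hG : constantCoeff G = 0 := by simp [G, ← coeff_zero_eq_constantCoeff_apply]
  have hF : (mk fun d => if d = 0 then 1 else z (d + 1) / (2 * d)!) =
      mk fun d => z (d + 1) / (2 * d)! := by
    ext (_ | d) <;> simp [hz1]
  have hrec := coeff_eq_sum_of_derivative_eq (hF ▸ hyp ▸ derivative_formalExp hG) n
  rw [show n + 2 - 1 = n + 1 by omega, show 2 * (n + 2) - 3 = 2 * (n + 1) - 1 by omega]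
  calc z (n + 2)
        = z (n + 1 + 1) / (2 * (n + 1))! * (n + 1) * ((2 * (n + 1))! / (n + 1 : ℚ)) := by
          field_simp
    _ = _ := by
      rw [hrec, sum_mul]
      refine sum_congr rfl fun k hk => ?_
      rw [mem_Icc] at hk
      rw [Nat.cast_choose_two_mul_sub_one hk.1 hk.2, if_neg (by omega),
        show n + 1 - k + 1 = n + 2 - k by omega]
      push_cast
      field_simp
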